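/- arXiv:2503.15045 — 3 statements merged into one kernel-verified Lean document; each statement's English description precedes it below -/
import Mathlib

section
/- Let f : ℝ^p × ℝ^q → ℝ be twice continuously differentiable, let S ⊆ ℝ^q be a convex set containing η*, and assume the semi-orthogonality condition ∇_η∇_θ f(θ*,η) = 0 for all η ∈ S, where (θ*,η*) satisfies ∇_θ f(θ*,η*) = 0. If in addition θ ↦ f(θ,η) is concave for each fixed η ∈ S, then θ* maximizes θ ↦ f(θ,η) for every η ∈ S; that is, the partial maximizer θ_η = argmax_θ f(θ,η) equals θ* for all η ∈ S. -/
/-!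
Semi-orthogonality says that the θ-gradient of `f` at `θ*` has zero derivative in `η` on the
convex set `S`, so it is constant there and keeps its value `0` from `η*`. A concave function
whose gradient vanishes at a point attains its maximum at that point.
-/

open InnerProductSpace

theorem ConcaveOn.isMaxOn_of_hasFDerivAt_eq_zero {E : Type*} [NormedAddCommGroup E]
    [NormedSpace ℝ E] {s : Set E} {g : E → ℝ} {a : E} (hg : ConcaveOn ℝ s g) (ha : a ∈ s)
    (hg' : HasFDerivAt g (0 : E →L[ℝ] ℝ) a) : IsMaxOn g s a := by
  intro x hx
  let ℓ : ℝ →ᵃ[ℝ] E := AffineMap.lineMap a x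
  have hconc : ConcaveOn ℝ (ℓ ⁻¹' s) (g ∘ ℓ) := hg.comp_affineMap ℓ
  have hderiv : HasDerivAt (g ∘ ℓ) 0 0 := by
    simpa using hg'.comp_hasDerivAt_of_eq 0 AffineMap.hasDerivAt_lineMap
      (AffineMap.lineMap_apply_zero a x).symm
  have hslope := hconc.slope_le_of_hasDerivAt (by simpa [ℓ] using ha) (by simpa [ℓ] using hx)
    zero_lt_one hderiv
  simpa [slope_def_field, ℓ] using hslope

theorem Convex.is_const_of_fderiv_eq_zero {E G : Type*} [NormedAddCommGroup E]
    [NormedSpace ℝ E] [NormedAddCommGroup G] [NormedSpace ℝ G] {s : Set E} {f : E → G}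
    {x y : E} (hs : Convex ℝ s) (hf : ∀ z ∈ s, DifferentiableAt ℝ f z)
    (hf' : ∀ z ∈ s, fderiv ℝ f z = 0) (hx : x ∈ s) (hy : y ∈ s) : f x = f y := by
  have h := hs.norm_image_sub_le_of_norm_fderiv_le hf (C := 0)
    (fun z hz => by simp [hf' z hz]) hx hy
  rw [zero_mul, norm_le_zero_iff, sub_eq_zero] at h
  exact h.symm

theorem gradient_comp_prodMk_left {E F : Type*} [NormedAddCommGroup E] [InnerProductSpace ℝ E]
    [CompleteSpace E] [NormedAddCommGroup F] [NormedSpace ℝ F] {f : E × F → ℝ}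
    (x : E) (y : F) (hf : DifferentiableAt ℝ f (x, y)) :
    gradient (fun x' => f (x', y)) x =
      (toDual ℝ E).symm ((fderiv ℝ f (x, y)).comp (.inl ℝ E F)) :=
  congrArg _ (hf.hasFDerivAt.comp x (hasFDerivAt_prodMk_left x y)).fderiv

theorem ContDiff.differentiable_gradient_comp_prodMk_left {E F : Type*} [NormedAddCommGroup E]
    [InnerProductSpace ℝ E] [CompleteSpace E] [NormedAddCommGroup F] [NormedSpace ℝ F]
    {f : E × F → ℝ} (hf : ContDiff ℝ 2 f) (x : E) :
    Differentiable ℝ (fun y => gradient (fun x' => f (x', y)) x) := by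
  have hfd : Differentiable ℝ f := hf.differentiable (by norm_num)
  simp_rw [gradient_comp_prodMk_left x _ (hfd _)]
  have hf' : Differentiable ℝ (fderiv ℝ f) :=
    (hf.fderiv_right (m := 1) (by norm_num)).differentiable one_ne_zero
  exact (toDual ℝ E).symm.toContinuousLinearEquiv.differentiable.comp
    ((hf'.comp (differentiable_const x |>.prodMk differentiable_id)).clm_comp
      (differentiable_const _))

/-- Lemma `Lsemiorto` (second claim): under semi-orthogonality and concavity of
`θ ↦ f(θ,η)`, the point `θ*` maximizes `θ ↦ f(θ,η)` for every `η ∈ S`, i.e. the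
partial maximizer `θ_η` equals `θ*` on `S`. -/
theorem statement_6 {p q : ℕ}
    (f : EuclideanSpace ℝ (Fin p) × EuclideanSpace ℝ (Fin q) → ℝ)
    (hf : ContDiff ℝ 2 f)
    (S : Set (EuclideanSpace ℝ (Fin q))) (hS : Convex ℝ S)
    (θs : EuclideanSpace ℝ (Fin p)) (ηs : EuclideanSpace ℝ (Fin q)) (hηs : ηs ∈ S)
    (hcrit : gradient (fun θ => f (θ, ηs)) θs = 0)
    (horth : ∀ η ∈ S, fderiv ℝ (fun η' => gradient (fun θ => f (θ, η')) θs) η = 0)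
    (hconc : ∀ η ∈ S, ConcaveOn ℝ Set.univ (fun θ => f (θ, η))) :
    ∀ η ∈ S, ∀ θ, f (θ, η) ≤ f (θs, η) := by
  intro η hη θ
  have hgrad : gradient (fun θ => f (θ, η)) θs = 0 := by
    rw [← hcrit]
    exact hS.is_const_of_fderiv_eq_zero
      (fun z _ => hf.differentiable_gradient_comp_prodMk_left θs z) horth hη hηs
  have hdiff : DifferentiableAt ℝ (fun θ => f (θ, η)) θs :=
    (hf.differentiable (by norm_num) _).comp θs (hasFDerivAt_prodMk_left θs η).differentiableAt
  have hzero : HasFDerivAt (fun θ => f (θ, η)) (0 : _ →L[ℝ] ℝ) θs := by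
    simpa [hgrad] using hdiff.hasGradientAt.hasFDerivAt
  exact (hconc η hη).isMaxOn_of_hasFDerivAt_eq_zero (Set.mem_univ θs) hzero (Set.mem_univ θ)
end

section
/- Let 𝔉 be a symmetric positive definite (p+q)×(p+q) matrix with block decomposition into 𝔉_θθ (p×p), 𝔉_θη (p×q), 𝔉_ηθ = 𝔉_θηᵀ, and 𝔉_ηη (q×q), and suppose the separability condition ‖𝔉_θθ^{−1/2} 𝔉_θη 𝔉_ηη⁻¹ 𝔉_ηθ 𝔉_θθ^{−1/2}‖ ≤ ρ² holds for some 0 ≤ ρ < 1 (operator norm). Then with 𝔉₀ = blockdiag(𝔉_θθ, 𝔉_ηη) one has the Loewner sandwich (1 − ρ)𝔉₀ ≤ 𝔉 ≤ (1 + ρ)𝔉₀. -/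
open scoped Matrix Matrix.Norms.L2Operator

/-- The old Mathlib `Matrix.PosSemidef.sqrt` (removed since), spelled out with its original
definition. -/
noncomputable def Matrix.PosSemidef.sqrtOld {n 𝕜 : Type*} [Fintype n] [DecidableEq n] [RCLike 𝕜]
    [PartialOrder 𝕜] [StarOrderedRing 𝕜]
    {A : Matrix n n 𝕜} (hA : A.PosSemidef) : Matrix n n 𝕜 :=
  hA.1.eigenvectorUnitary.1 * Matrix.diagonal ((↑) ∘ (√·) ∘ hA.1.eigenvalues) *
    (star hA.1.eigenvectorUnitary : Matrix n n 𝕜)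

/-!
Write `𝔉_θθ = S²` and `𝔉_ηη = T²` with symmetric square roots `S`, `T`, and whiten the coupling
block: `𝔉_θη = S M T` with `M = S⁻¹ 𝔉_θη T⁻¹`. Since `M Mᵀ = S⁻¹ 𝔉_θη 𝔉_ηη⁻¹ 𝔉_ηθ S⁻¹`, the
separability condition says exactly `‖M‖ ≤ ρ`. For `x = (u, v)` the cross term of the quadratic
form is then bounded by Cauchy–Schwarz and AM–GM,
`2 |uᵀ 𝔉_θη v| ≤ 2 ρ ‖S u‖ ‖T v‖ ≤ ρ (uᵀ 𝔉_θθ u + vᵀ 𝔉_ηη v) = ρ xᵀ 𝔉₀ x`,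
which is both halves of the sandwich.
-/

namespace Matrix

variable {m n : Type*} [Fintype m] [Fintype n]

section SqrtOld

variable [DecidableEq n] {A : Matrix n n ℝ}

lemma PosSemidef.sqrtOld_mul_self (hA : A.PosSemidef) : hA.sqrtOld * hA.sqrtOld = A := by
  have hU : (star hA.1.eigenvectorUnitary : Matrix n n ℝ) * hA.1.eigenvectorUnitary = 1 :=
    Unitary.coe_star_mul_self _
  have hspec := hA.1.spectral_theorem
  rw [Unitary.conjStarAlgAut_apply] at hspec
  conv_rhs => rw [hspec]
  simp only [sqrtOld, Matrix.mul_assoc]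
  rw [← Matrix.mul_assoc (star _) _, hU, Matrix.one_mul, ← Matrix.mul_assoc (diagonal _),
    diagonal_mul_diagonal]
  congr 3
  funext i
  simp [Real.mul_self_sqrt (hA.eigenvalues_nonneg i)]

lemma PosSemidef.isHermitian_sqrtOld (hA : A.PosSemidef) : hA.sqrtOld.IsHermitian := by
  simp [sqrtOld, IsHermitian, star_eq_conjTranspose, Matrix.mul_assoc]

lemma PosDef.isUnit_det_sqrtOld (hA : A.PosDef) : IsUnit hA.posSemidef.sqrtOld.det := by
  rw [← isUnit_iff_isUnit_det]
  have hA' : IsUnit (hA.posSemidef.sqrtOld * hA.posSemidef.sqrtOld) := by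
    rw [hA.posSemidef.sqrtOld_mul_self]
    exact hA.isUnit
  exact isUnit_of_mul_isUnit_left hA'

end SqrtOld

lemma IsHermitian.dotProduct_mul_self_mulVec {S : Matrix n n ℝ} (hS : S.IsHermitian)
    (u : n → ℝ) : u ⬝ᵥ ((S * S) *ᵥ u) = ‖WithLp.toLp 2 (S *ᵥ u)‖ ^ 2 := by
  rw [← real_inner_self_eq_norm_sq, EuclideanSpace.inner_eq_star_dotProduct, star_trivial,
    ← mulVec_mulVec, dotProduct_mulVec, ← mulVec_transpose, ← conjTranspose_eq_transpose_of_trivial,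
    hS.eq, dotProduct_comm]

section L2OpNorm

variable [DecidableEq n]

lemma l2_opNorm_mul_conjTranspose_self [DecidableEq m] {𝕜 : Type*} [RCLike 𝕜]
    (A : Matrix m n 𝕜) : ‖A * Aᴴ‖ = ‖A‖ * ‖A‖ := by
  simpa [l2_opNorm_conjTranspose] using l2_opNorm_conjTranspose_mul_self Aᴴ

lemma abs_dotProduct_mulVec_le (M : Matrix m n ℝ) (a : m → ℝ) (b : n → ℝ) :
    |a ⬝ᵥ (M *ᵥ b)| ≤ ‖WithLp.toLp 2 a‖ * (‖M‖ * ‖WithLp.toLp 2 b‖) := by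
  calc |a ⬝ᵥ (M *ᵥ b)| = |inner ℝ (WithLp.toLp 2 a) (WithLp.toLp 2 (M *ᵥ b))| := by
        rw [EuclideanSpace.inner_eq_star_dotProduct, star_trivial, dotProduct_comm]
  _ ≤ ‖WithLp.toLp 2 a‖ * ‖WithLp.toLp 2 (M *ᵥ b)‖ := abs_real_inner_le_norm _ _
  _ ≤ _ := by gcongr; exact l2_opNorm_mulVec M (WithLp.toLp 2 b)

theorem two_mul_abs_dotProduct_mul_mul_mulVec_le {S : Matrix m m ℝ} {T : Matrix n n ℝ}
    (hS : S.IsHermitian) (hT : T.IsHermitian) {M : Matrix m n ℝ} {ρ : ℝ} (hM : ‖M‖ ≤ ρ)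
    (u : m → ℝ) (v : n → ℝ) :
    2 * |u ⬝ᵥ ((S * M * T) *ᵥ v)| ≤ ρ * (u ⬝ᵥ ((S * S) *ᵥ u) + v ⬝ᵥ ((T * T) *ᵥ v)) := by
  have hρ : 0 ≤ ρ := (norm_nonneg M).trans hM
  rw [hS.dotProduct_mul_self_mulVec, hT.dotProduct_mul_self_mulVec]
  set a := ‖WithLp.toLp 2 (S *ᵥ u)‖
  set b := ‖WithLp.toLp 2 (T *ᵥ v)‖
  have hcross : |u ⬝ᵥ ((S * M * T) *ᵥ v)| ≤ a * (ρ * b) := by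
    calc |u ⬝ᵥ ((S * M * T) *ᵥ v)| = |(S *ᵥ u) ⬝ᵥ (M *ᵥ (T *ᵥ v))| := by
          rw [← mulVec_mulVec, ← mulVec_mulVec, dotProduct_mulVec, ← mulVec_transpose,
            ← conjTranspose_eq_transpose_of_trivial, hS.eq]
    _ ≤ a * (‖M‖ * b) := abs_dotProduct_mulVec_le M _ _
    _ ≤ a * (ρ * b) := by gcongr
  nlinarith [mul_nonneg hρ (sq_nonneg (a - b))]

lemma l2_opNorm_inv_mul_mul_inv_le [DecidableEq m] {S : Matrix m m ℝ}
    {T : Matrix n n ℝ} (hS : S.IsHermitian) (hT : T.IsHermitian) (B : Matrix m n ℝ) {ρ : ℝ}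
    (hρ : 0 ≤ ρ) (h : ‖S⁻¹ * B * (T * T)⁻¹ * Bᵀ * S⁻¹‖ ≤ ρ ^ 2) : ‖S⁻¹ * B * T⁻¹‖ ≤ ρ := by
  have hMMH : S⁻¹ * B * T⁻¹ * (S⁻¹ * B * T⁻¹)ᴴ = S⁻¹ * B * (T * T)⁻¹ * Bᵀ * S⁻¹ := by
    rw [conjTranspose_mul, conjTranspose_mul, conjTranspose_nonsing_inv,
      conjTranspose_nonsing_inv, hS.eq, hT.eq, conjTranspose_eq_transpose_of_trivial,
      Matrix.mul_inv_rev]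
    simp only [Matrix.mul_assoc]
  rw [← hMMH, l2_opNorm_mul_conjTranspose_self, sq] at h
  exact (mul_self_le_mul_self_iff (norm_nonneg _) hρ).2 h

end L2OpNorm

lemma dotProduct_fromBlocks_mulVec {α : Type*} [NonUnitalNonAssocSemiring α]
    (A : Matrix m m α) (B : Matrix m n α) (C : Matrix n m α) (D : Matrix n n α)
    (u : m → α) (v : n → α) :
    Sum.elim u v ⬝ᵥ (fromBlocks A B C D *ᵥ Sum.elim u v) =
      u ⬝ᵥ (A *ᵥ u) + u ⬝ᵥ (B *ᵥ v) + (v ⬝ᵥ (C *ᵥ u) + v ⬝ᵥ (D *ᵥ v)) := by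
  simp only [fromBlocks_mulVec, sumElim_dotProduct_sumElim, dotProduct_add, Sum.elim_comp_inl,
    Sum.elim_comp_inr]

theorem posSemidef_fromBlocks_sandwich {A : Matrix m m ℝ} {D : Matrix n n ℝ}
    (hA : A.IsHermitian) (hD : D.IsHermitian) (B : Matrix m n ℝ) {ρ : ℝ}
    (hB : ∀ u v, 2 * |u ⬝ᵥ (B *ᵥ v)| ≤ ρ * (u ⬝ᵥ (A *ᵥ u) + v ⬝ᵥ (D *ᵥ v))) :
    (fromBlocks A B Bᵀ D - (1 - ρ) • fromBlocks A 0 0 D).PosSemidef ∧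
      ((1 + ρ) • fromBlocks A 0 0 D - fromBlocks A B Bᵀ D).PosSemidef := by
  have hF : (fromBlocks A B Bᵀ D).IsHermitian :=
    isHermitian_fromBlocks_iff.2 ⟨hA, conjTranspose_eq_transpose_of_trivial B, by simp, hD⟩
  have hF₀ : (fromBlocks A 0 0 D).IsHermitian :=
    isHermitian_fromBlocks_iff.2 ⟨hA, by simp, by simp, hD⟩
  have hsmul (r : ℝ) : (r • fromBlocks A 0 0 D).IsHermitian := hF₀.smul (IsSelfAdjoint.all r)
  have hquad (u : m → ℝ) (v : n → ℝ) :
      Sum.elim u v ⬝ᵥ (fromBlocks A B Bᵀ D *ᵥ Sum.elim u v) =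
        u ⬝ᵥ (A *ᵥ u) + v ⬝ᵥ (D *ᵥ v) + 2 * (u ⬝ᵥ (B *ᵥ v)) := by
    rw [dotProduct_fromBlocks_mulVec, mulVec_transpose, dotProduct_comm v, ← dotProduct_mulVec]
    ring
  have hdiag (u : m → ℝ) (v : n → ℝ) :
      Sum.elim u v ⬝ᵥ (fromBlocks A 0 0 D *ᵥ Sum.elim u v) = u ⬝ᵥ (A *ᵥ u) + v ⬝ᵥ (D *ᵥ v) := by
    simp only [dotProduct_fromBlocks_mulVec, zero_mulVec, dotProduct_zero, add_zero, zero_add]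
  constructor
  · refine PosSemidef.of_dotProduct_mulVec_nonneg (hF.sub (hsmul _)) fun x => ?_
    rw [← Sum.elim_comp_inl_inr x, star_trivial, sub_mulVec, smul_mulVec, dotProduct_sub,
      dotProduct_smul, smul_eq_mul, hquad, hdiag]
    linarith [hB (x ∘ Sum.inl) (x ∘ Sum.inr), neg_abs_le ((x ∘ Sum.inl) ⬝ᵥ (B *ᵥ (x ∘ Sum.inr)))]
  · refine PosSemidef.of_dotProduct_mulVec_nonneg ((hsmul _).sub hF) fun x => ?_
    rw [← Sum.elim_comp_inl_inr x, star_trivial, sub_mulVec, smul_mulVec, dotProduct_sub,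
      dotProduct_smul, smul_eq_mul, hquad, hdiag]
    linarith [hB (x ∘ Sum.inl) (x ∘ Sum.inr), le_abs_self ((x ∘ Sum.inl) ⬝ᵥ (B *ᵥ (x ∘ Sum.inr)))]

end Matrix

theorem statement_18_general {p q : ℕ}
    (Fθθ : Matrix (Fin p) (Fin p) ℝ) (Fθη : Matrix (Fin p) (Fin q) ℝ)
    (Fηη : Matrix (Fin q) (Fin q) ℝ)
    (hFpos : (Matrix.fromBlocks Fθθ Fθη Fθηᵀ Fηη).PosDef)
    (hθθ : Fθθ.PosDef)
    (ρ : ℝ) (hρ0 : 0 ≤ ρ)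
    (hsep : ‖(hθθ.posSemidef.sqrtOld)⁻¹ * Fθη * Fηη⁻¹ * Fθηᵀ * (hθθ.posSemidef.sqrtOld)⁻¹‖ ≤ ρ ^ 2) :
    (Matrix.fromBlocks Fθθ Fθη Fθηᵀ Fηη
        - (1 - ρ) • Matrix.fromBlocks Fθθ 0 0 Fηη).PosSemidef ∧
      ((1 + ρ) • Matrix.fromBlocks Fθθ 0 0 Fηη
        - Matrix.fromBlocks Fθθ Fθη Fθηᵀ Fηη).PosSemidef := by
  have hηη : Fηη.PosDef := hFpos.submatrix Sum.inr_injective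
  have hS := hθθ.posSemidef.isHermitian_sqrtOld
  have hT := hηη.posSemidef.isHermitian_sqrtOld
  have hSS := hθθ.posSemidef.sqrtOld_mul_self
  have hTT := hηη.posSemidef.sqrtOld_mul_self
  set S := hθθ.posSemidef.sqrtOld
  set T := hηη.posSemidef.sqrtOld
  have hFθη : S * (S⁻¹ * Fθη * T⁻¹) * T = Fθη := by
    rw [Matrix.mul_assoc S⁻¹, Matrix.mul_nonsing_inv_cancel_left _ _ hθθ.isUnit_det_sqrtOld,
      Matrix.nonsing_inv_mul_cancel_right _ _ hηη.isUnit_det_sqrtOld]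
  have hM : ‖S⁻¹ * Fθη * T⁻¹‖ ≤ ρ :=
    Matrix.l2_opNorm_inv_mul_mul_inv_le hS hT Fθη hρ0 (by rwa [hTT])
  refine Matrix.posSemidef_fromBlocks_sandwich hθθ.isHermitian hηη.isHermitian Fθη fun u v => ?_
  simpa only [hFθη, hSS, hTT] using Matrix.two_mul_abs_dotProduct_mul_mul_mulVec_le hS hT hM u v

/-- Lemma `Lidentsemi` (first claim): under the separability condition
`‖𝔉_θθ^{−1/2} 𝔉_θη 𝔉_ηη⁻¹ 𝔉_ηθ 𝔉_θθ^{−1/2}‖ ≤ ρ² < 1`, the Loewner sandwich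
`(1 − ρ)𝔉₀ ≤ 𝔉 ≤ (1 + ρ)𝔉₀` holds with `𝔉₀ = blockdiag(𝔉_θθ, 𝔉_ηη)`. -/
theorem statement_18 {p q : ℕ}
    (Fθθ : Matrix (Fin p) (Fin p) ℝ) (Fθη : Matrix (Fin p) (Fin q) ℝ)
    (Fηη : Matrix (Fin q) (Fin q) ℝ)
    (hFpos : (Matrix.fromBlocks Fθθ Fθη Fθηᵀ Fηη).PosDef)
    (hθθ : Fθθ.PosDef)
    (ρ : ℝ) (hρ0 : 0 ≤ ρ) (hρ1 : ρ < 1)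
    (hsep : ‖(hθθ.posSemidef.sqrtOld)⁻¹ * Fθη * Fηη⁻¹ * Fθηᵀ * (hθθ.posSemidef.sqrtOld)⁻¹‖ ≤ ρ ^ 2) :
    (Matrix.fromBlocks Fθθ Fθη Fθηᵀ Fηη
        - (1 - ρ) • Matrix.fromBlocks Fθθ 0 0 Fηη).PosSemidef ∧
      ((1 + ρ) • Matrix.fromBlocks Fθθ 0 0 Fηη
        - Matrix.fromBlocks Fθθ Fθη Fθηᵀ Fηη).PosSemidef :=
  statement_18_general Fθθ Fθη Fηη hFpos hθθ ρ hρ0 hsep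
end

section
/- Let 𝔉 be a symmetric positive definite (p+q)×(p+q) matrix with block decomposition into 𝔉_θθ (p×p), 𝔉_θη (p×q), 𝔉_ηθ = 𝔉_θηᵀ, and 𝔉_ηη (q×q), and suppose the separability condition ‖𝔉_θθ^{−1/2} 𝔉_θη 𝔉_ηη⁻¹ 𝔉_ηθ 𝔉_θθ^{−1/2}‖ ≤ ρ² holds for some 0 ≤ ρ < 1 (operator norm). Then the Schur complements Φ_θθ = 𝔉_θθ − 𝔉_θη 𝔉_ηη⁻¹ 𝔉_ηθ and Φ_ηη = 𝔉_ηη − 𝔉_ηθ 𝔉_θθ⁻¹ 𝔉_θη satisfy (1 − ρ²)𝔉_θθ ≤ Φ_θθ ≤ 𝔉_θθ and (1 − ρ²)𝔉_ηη ≤ Φ_ηη ≤ 𝔉_ηη in the Loewner order. -/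
open scoped Matrix Matrix.Norms.L2Operator

section

open scoped ComplexOrder

/-- The square root of a positive semidefinite matrix, as `Matrix.PosSemidef.sqrt` was defined in
the older Mathlib (it has since been removed in favour of `CFC.sqrt`). -/
noncomputable def Matrix.PosSemidef.sqrt {n 𝕜 : Type*} [Fintype n] [DecidableEq n] [RCLike 𝕜]
    {A : Matrix n n 𝕜} (hA : A.PosSemidef) : Matrix n n 𝕜 :=
  hA.1.eigenvectorUnitary.1 * Matrix.diagonal ((↑) ∘ (Real.sqrt ∘ hA.1.eigenvalues)) *
    (star hA.1.eigenvectorUnitary : Matrix n n 𝕜)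

end

/-!
Write `F = Fθθ`, `G = Fηη`, `S = F^{1/2}`, `T = G^{1/2}` and `B = S⁻¹ Fθη T⁻¹`. The
separability matrix is `B Bᴴ` and `F - Φ_θθ = S (B Bᴴ) S`, while `G - Φ_ηη = T (Bᴴ B) T`.
Since `‖Bᴴ B‖ = ‖B‖² = ‖B Bᴴ‖ ≤ ρ²`, both `B Bᴴ` and `Bᴴ B` lie below `ρ² • 1`, and
conjugating by `S`, resp. `T`, gives the lower bounds. The upper bounds say that the
subtracted terms are positive semidefinite.
-/

open scoped ComplexOrder

namespace Matrix

variable {m n 𝕜 : Type*} [Fintype m] [Fintype n] [DecidableEq n] [RCLike 𝕜]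

namespace PosSemidef

lemma sqrt_mul_self {A : Matrix n n 𝕜} (hA : A.PosSemidef) : hA.sqrt * hA.sqrt = A := by
  have hU : (star hA.1.eigenvectorUnitary : Matrix n n 𝕜) * hA.1.eigenvectorUnitary.1 = 1 :=
    Unitary.coe_star_mul_self _
  conv_rhs => rw [hA.1.spectral_theorem, Unitary.conjStarAlgAut_apply]
  unfold Matrix.PosSemidef.sqrt
  calc _ = hA.1.eigenvectorUnitary.1 * diagonal ((↑) ∘ (Real.sqrt ∘ hA.1.eigenvalues)) *
        ((star hA.1.eigenvectorUnitary : Matrix n n 𝕜) * hA.1.eigenvectorUnitary.1) *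
        diagonal ((↑) ∘ (Real.sqrt ∘ hA.1.eigenvalues)) *
        (star hA.1.eigenvectorUnitary : Matrix n n 𝕜) := by simp only [Matrix.mul_assoc]
    _ = _ := by
      rw [hU, Matrix.mul_one, Matrix.mul_assoc _ (diagonal _) (diagonal _),
        diagonal_mul_diagonal]
      congr 3
      funext i
      simp only [Function.comp_apply]
      rw [← RCLike.ofReal_mul, Real.mul_self_sqrt (hA.eigenvalues_nonneg i)]

lemma posSemidef_sqrt {A : Matrix n n 𝕜} (hA : A.PosSemidef) : hA.sqrt.PosSemidef := by
  have hD : (diagonal ((↑) ∘ (Real.sqrt ∘ hA.1.eigenvalues)) : Matrix n n 𝕜).PosSemidef :=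
    PosSemidef.diagonal fun i => by
      simp only [Pi.zero_apply, Function.comp_apply]
      exact_mod_cast Real.sqrt_nonneg _
  simpa only [PosSemidef.sqrt, star_eq_conjTranspose] using
    hD.mul_mul_conjTranspose_same hA.1.eigenvectorUnitary.1

end PosSemidef

lemma PosDef.isUnit_sqrt {A : Matrix n n 𝕜} (hA : A.PosDef) : IsUnit hA.posSemidef.sqrt :=
  isUnit_of_mul_isUnit_left (hA.posSemidef.sqrt_mul_self ▸ hA.isUnit)

lemma l2_opNorm_conjTranspose_mul_self_eq [DecidableEq m] (B : Matrix m n 𝕜) :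
    ‖Bᴴ * B‖ = ‖B * Bᴴ‖ := by
  rw [l2_opNorm_conjTranspose_mul_self, ← l2_opNorm_conjTranspose B,
    ← l2_opNorm_conjTranspose_mul_self, conjTranspose_conjTranspose]

lemma posSemidef_smul_one_sub_of_l2_opNorm_le {K : Matrix n n 𝕜} (hK : K.IsHermitian) {c : ℝ}
    (hc : ‖K‖ ≤ c) : (c • 1 - K).PosSemidef := by
  rw [← isPositive_toEuclideanLin_iff]
  refine ⟨isSymmetric_toEuclideanLin_iff.mpr ((isHermitian_one.smul (.all c)).sub hK), fun x ↦ ?_⟩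
  have hKx : RCLike.re (inner 𝕜 (toEuclideanLin K x) x) ≤ c * ‖x‖ ^ 2 :=
    calc _ ≤ ‖toEuclideanCLM (n := n) (𝕜 := 𝕜) K x‖ * ‖x‖ := re_inner_le_norm _ _
      _ ≤ ‖K‖ * ‖x‖ * ‖x‖ := by gcongr; exact (toEuclideanCLM (n := n) (𝕜 := 𝕜) K).le_opNorm x
      _ ≤ c * ‖x‖ ^ 2 := by rw [mul_assoc, ← sq]; gcongr
  have hc1 : toEuclideanLin (c • 1 : Matrix n n 𝕜) x = (c : 𝕜) • x := by
    rw [RCLike.real_smul_eq_coe_smul (K := 𝕜), map_smul]; simp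
  simp only [map_sub, LinearMap.sub_apply, inner_sub_left, sub_nonneg]
  rwa [hc1, inner_smul_left, inner_self_eq_norm_sq_to_K, RCLike.conj_ofReal, ← RCLike.ofReal_pow,
    ← RCLike.ofReal_mul, RCLike.ofReal_re]

lemma posSemidef_smul_conjTranspose_mul_self_sub {S A : Matrix n n 𝕜} (hS : IsUnit S)
    (hA : A.IsHermitian) {c : ℝ} (hc : ‖(Sᴴ)⁻¹ * A * S⁻¹‖ ≤ c) :
    (c • (Sᴴ * S) - A).PosSemidef := by
  have hSdet : IsUnit S.det := (isUnit_iff_isUnit_det S).mp hS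
  have hSHdet : IsUnit Sᴴ.det := (isUnit_iff_isUnit_det _).mp hS.star
  have hK : ((Sᴴ)⁻¹ * A * S⁻¹).IsHermitian := by
    simp only [IsHermitian, conjTranspose_mul, conjTranspose_nonsing_inv, hA.eq,
      conjTranspose_conjTranspose, Matrix.mul_assoc]
  have hconj : Sᴴ * (c • 1 - (Sᴴ)⁻¹ * A * S⁻¹) * S = c • (Sᴴ * S) - A := by
    rw [Matrix.mul_sub, Matrix.sub_mul, Matrix.mul_smul, Matrix.mul_one, Matrix.smul_mul,
      ← Matrix.mul_assoc, ← Matrix.mul_assoc, mul_nonsing_inv _ hSHdet, Matrix.one_mul,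
      nonsing_inv_mul_cancel_right _ _ hSdet]
  simpa only [hconj] using
    (posSemidef_smul_one_sub_of_l2_opNorm_le hK hc).conjTranspose_mul_mul_same S

namespace PosDef

lemma posSemidef_smul_sub_of_l2_opNorm_le {A C : Matrix n n 𝕜} (hA : A.PosDef)
    (hC : C.IsHermitian) {c : ℝ}
    (hc : ‖(hA.posSemidef.sqrt)⁻¹ * C * (hA.posSemidef.sqrt)⁻¹‖ ≤ c) :
    (c • A - C).PosSemidef := by
  have hS := hA.posSemidef.posSemidef_sqrt.isHermitian.eq
  have := posSemidef_smul_conjTranspose_mul_self_sub hA.isUnit_sqrt hC (c := c) (by rwa [hS])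
  rwa [hS, hA.posSemidef.sqrt_mul_self] at this

lemma l2_opNorm_sqrt_inv_sandwich_comm [DecidableEq m] {A : Matrix m m 𝕜} {B : Matrix n n 𝕜}
    (hA : A.PosDef) (hB : B.PosDef) (X : Matrix m n 𝕜) :
    ‖(hB.posSemidef.sqrt)⁻¹ * (Xᴴ * A⁻¹ * X) * (hB.posSemidef.sqrt)⁻¹‖ =
      ‖(hA.posSemidef.sqrt)⁻¹ * X * B⁻¹ * Xᴴ * (hA.posSemidef.sqrt)⁻¹‖ := by
  set S := hA.posSemidef.sqrt
  set T := hB.posSemidef.sqrt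
  have hS : Sᴴ = S := hA.posSemidef.posSemidef_sqrt.isHermitian.eq
  have hT : Tᴴ = T := hB.posSemidef.posSemidef_sqrt.isHermitian.eq
  have hSS : S * S = A := hA.posSemidef.sqrt_mul_self
  have hTT : T * T = B := hB.posSemidef.sqrt_mul_self
  rw [← hSS, ← hTT, Matrix.mul_inv_rev, Matrix.mul_inv_rev]
  convert l2_opNorm_conjTranspose_mul_self_eq (S⁻¹ * X * T⁻¹) using 2 <;>
    simp only [conjTranspose_mul, conjTranspose_nonsing_inv, hS, hT, Matrix.mul_assoc]

end PosDef

end Matrix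

open Matrix

theorem statement_19_general {p q : ℕ}
    (Fθθ : Matrix (Fin p) (Fin p) ℝ) (Fθη : Matrix (Fin p) (Fin q) ℝ)
    (Fηη : Matrix (Fin q) (Fin q) ℝ)
    (hFpos : (Matrix.fromBlocks Fθθ Fθη Fθηᵀ Fηη).PosDef)
    (hθθ : Fθθ.PosDef)
    (ρ : ℝ)
    (hsep : ‖(hθθ.posSemidef.sqrt)⁻¹ * Fθη * Fηη⁻¹ * Fθηᵀ * (hθθ.posSemidef.sqrt)⁻¹‖ ≤ ρ ^ 2) :
    ((Fθθ - Fθη * Fηη⁻¹ * Fθηᵀ) - (1 - ρ ^ 2) • Fθθ).PosSemidef ∧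
      (Fθθ - (Fθθ - Fθη * Fηη⁻¹ * Fθηᵀ)).PosSemidef ∧
      ((Fηη - Fθηᵀ * Fθθ⁻¹ * Fθη) - (1 - ρ ^ 2) • Fηη).PosSemidef ∧
      (Fηη - (Fηη - Fθηᵀ * Fθθ⁻¹ * Fθη)).PosSemidef := by
  have hηη : Fηη.PosDef := hFpos.submatrix Sum.inr_injective
  have hC : (Fθη * Fηη⁻¹ * Fθηᵀ).PosSemidef := by
    simpa only [conjTranspose_eq_transpose_of_trivial] using
      hηη.inv.posSemidef.mul_mul_conjTranspose_same Fθη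
  have hD : (Fθηᵀ * Fθθ⁻¹ * Fθη).PosSemidef := by
    simpa only [conjTranspose_eq_transpose_of_trivial] using
      hθθ.inv.posSemidef.conjTranspose_mul_mul_same Fθη
  have hsep_symm := hθθ.l2_opNorm_sqrt_inv_sandwich_comm hηη Fθη
  rw [conjTranspose_eq_transpose_of_trivial] at hsep_symm
  have hlower : ∀ {k : ℕ} (F C : Matrix (Fin k) (Fin k) ℝ),
      F - C - (1 - ρ ^ 2) • F = ρ ^ 2 • F - C := by
    intros; module
  refine ⟨?_, by rwa [sub_sub_cancel], ?_, by rwa [sub_sub_cancel]⟩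
  · rw [hlower]
    exact hθθ.posSemidef_smul_sub_of_l2_opNorm_le hC.isHermitian
      (by simpa only [Matrix.mul_assoc] using hsep)
  · rw [hlower]
    exact hηη.posSemidef_smul_sub_of_l2_opNorm_le hD.isHermitian (hsep_symm.trans_le hsep)

/-- Lemma `Lidentsemi` (second claim): under the separability condition
`‖𝔉_θθ^{−1/2} 𝔉_θη 𝔉_ηη⁻¹ 𝔉_ηθ 𝔉_θθ^{−1/2}‖ ≤ ρ² < 1`, the Schur complements satisfy
`(1 − ρ²)𝔉_θθ ≤ Φ_θθ ≤ 𝔉_θθ` and `(1 − ρ²)𝔉_ηη ≤ Φ_ηη ≤ 𝔉_ηη`. -/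
theorem statement_19 {p q : ℕ}
    (Fθθ : Matrix (Fin p) (Fin p) ℝ) (Fθη : Matrix (Fin p) (Fin q) ℝ)
    (Fηη : Matrix (Fin q) (Fin q) ℝ)
    (hFpos : (Matrix.fromBlocks Fθθ Fθη Fθηᵀ Fηη).PosDef)
    (hθθ : Fθθ.PosDef)
    (ρ : ℝ) (hρ0 : 0 ≤ ρ) (hρ1 : ρ < 1)
    (hsep : ‖(hθθ.posSemidef.sqrt)⁻¹ * Fθη * Fηη⁻¹ * Fθηᵀ * (hθθ.posSemidef.sqrt)⁻¹‖ ≤ ρ ^ 2) :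
    ((Fθθ - Fθη * Fηη⁻¹ * Fθηᵀ) - (1 - ρ ^ 2) • Fθθ).PosSemidef ∧
      (Fθθ - (Fθθ - Fθη * Fηη⁻¹ * Fθηᵀ)).PosSemidef ∧
      ((Fηη - Fθηᵀ * Fθθ⁻¹ * Fθη) - (1 - ρ ^ 2) • Fηη).PosSemidef ∧
      (Fηη - (Fηη - Fθηᵀ * Fθθ⁻¹ * Fθη)).PosSemidef :=
  statement_19_general Fθθ Fθη Fηη hFpos hθθ ρ hsep
end
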